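/- Let f : E → ℝ be differentiable with gradient ∇f, μ-smooth and λ-strongly convex with 0 < λ ≤ μ, and let θ* be a global minimizer of f. Fix a step size η with 0 < η < 2/μ, set ρ = 1 − 2ηλ·(1 − μη/2), and let (θ^s) be the gradient descent iterates θ^{s+1} = θ^s − η·∇f(θ^s) started from any θ^0 ∈ E. Then for every s ≥ 0, ‖θ^s − θ*‖² ≤ (2ρ^s/λ)·(f(θ^0) − f(θ*)). -/

import Mathlib

open RealInnerProductSpace

/-- **Descent lemma**: a `μ`-smooth function satisfies the quadratic upper bound. -/
theorem descent_lemma_aux {E : Type*} [NormedAddCommGroup E] [InnerProductSpace ℝ E]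
    [CompleteSpace E]
    (f : E → ℝ) (f' : E → E) (μ : ℝ)
    (hdiff : ∀ x, HasGradientAt f (f' x) x)
    (hsmooth : ∀ x y, ‖f' x - f' y‖ ≤ μ * ‖x - y‖)
    (x y : E) : f y ≤ f x + ⟪f' x, y - x⟫ + μ / 2 * ‖y - x‖ ^ 2 := by
  set d := y - x with hd
  have hg : ∀ t : ℝ, HasDerivAt (fun t : ℝ => f (x + t • d)) ⟪f' (x + t • d), d⟫ t := by
    intro t
    have h1 : HasDerivAt (fun t : ℝ => x + t • d) d t := by
      simpa using ((hasDerivAt_id t).smul_const d).const_add x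
    have h2 : HasDerivAt (fun t : ℝ => f (x + t • d))
        ((InnerProductSpace.toDual ℝ E (f' (x + t • d))) d) t :=
      (hasGradientAt_iff_hasFDerivAt.1 (hdiff (x + t • d))).comp_hasDerivAt t h1
    simpa using h2
  set φ : ℝ → ℝ := fun t => f (x + t • d) - t * ⟪f' x, d⟫ - μ / 2 * t ^ 2 * ‖d‖ ^ 2 with hφ
  have hφ' : ∀ t : ℝ, HasDerivAt φ (⟪f' (x + t • d), d⟫ - ⟪f' x, d⟫ - μ * t * ‖d‖ ^ 2) t := by
    intro t
    have h3 : HasDerivAt (fun t : ℝ => t * ⟪f' x, d⟫) ⟪f' x, d⟫ t := by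
      simpa using (hasDerivAt_id t).mul_const ⟪f' x, d⟫
    have h4 : HasDerivAt (fun t : ℝ => μ / 2 * t ^ 2 * ‖d‖ ^ 2) (μ * t * ‖d‖ ^ 2) t := by
      have := ((hasDerivAt_pow 2 t).const_mul (μ / 2)).mul_const (‖d‖ ^ 2)
      exact this.congr_deriv (by push_cast; ring)
    exact ((hg t).sub h3).sub h4
  have hdφ : Differentiable ℝ φ := fun t => (hφ' t).differentiableAt
  have hmono : AntitoneOn φ (Set.Icc 0 1) := by
    apply antitoneOn_of_deriv_nonpos (convex_Icc 0 1) hdφ.continuous.continuousOn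
      (hdφ.differentiableOn)
    intro t ht
    simp only [interior_Icc, Set.mem_Ioo] at ht
    rw [(hφ' t).deriv]
    have hcs : ⟪f' (x + t • d) - f' x, d⟫ ≤ ‖f' (x + t • d) - f' x‖ * ‖d‖ :=
      real_inner_le_norm _ _
    have hsm : ‖f' (x + t • d) - f' x‖ ≤ μ * (t * ‖d‖) := by
      have := hsmooth (x + t • d) x
      simpa [norm_smul, abs_of_pos ht.1] using this
    have : ⟪f' (x + t • d), d⟫ - ⟪f' x, d⟫ ≤ μ * t * ‖d‖ ^ 2 := by
      rw [← inner_sub_left]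
      calc ⟪f' (x + t • d) - f' x, d⟫ ≤ ‖f' (x + t • d) - f' x‖ * ‖d‖ := hcs
        _ ≤ μ * (t * ‖d‖) * ‖d‖ := by
            apply mul_le_mul_of_nonneg_right hsm (norm_nonneg _)
        _ = μ * t * ‖d‖ ^ 2 := by ring
    linarith
  have h01 := hmono (Set.mem_Icc.2 ⟨le_refl 0, zero_le_one⟩)
    (Set.mem_Icc.2 ⟨zero_le_one, le_refl 1⟩) zero_le_one
  simp only [hφ, zero_smul, add_zero, one_smul, zero_pow, one_pow, zero_mul, mul_zero,
    mul_one, sub_zero] at h01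
  have hxy : x + d = y := by rw [hd]; abel
  rw [hxy] at h01
  linarith

/-- **Linear convergence of gradient descent in parameter distance.** Under `μ`-smoothness
and `λ`-strong convexity with `0 < λ ≤ μ`, global minimizer `θ*`, step size `0 < η < 2/μ`,
and `ρ = 1 - 2ηλ(1 - μη/2)`, the gradient descent iterates satisfy
`‖θ^s - θ*‖² ≤ (2 ρ^s / λ) (f θ^0 - f θ*)`. -/
theorem gradient_descent_param_convergence
    {E : Type*} [NormedAddCommGroup E] [InnerProductSpace ℝ E] [CompleteSpace E]
    (f : E → ℝ) (f' : E → E) (μ lam : ℝ) (hlam : 0 < lam) (hlamμ : lam ≤ μ)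
    (hdiff : ∀ x, HasGradientAt f (f' x) x)
    (hsmooth : ∀ x y, ‖f' x - f' y‖ ≤ μ * ‖x - y‖)
    (hsc : ∀ x y, f y ≥ f x + ⟪f' x, y - x⟫ + lam / 2 * ‖y - x‖ ^ 2)
    (θstar : E) (hmin : ∀ θ, f θstar ≤ f θ)
    (η : ℝ) (hη : 0 < η) (hη2 : η < 2 / μ)
    (ρ : ℝ) (hρ : ρ = 1 - 2 * η * lam * (1 - μ * η / 2))
    (θseq : ℕ → E) (hiter : ∀ s : ℕ, θseq (s + 1) = θseq s - η • f' (θseq s)) :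
    ∀ s : ℕ, ‖θseq s - θstar‖ ^ 2 ≤ 2 * ρ ^ s / lam * (f (θseq 0) - f θstar) := by
  have hμ : 0 < μ := lt_of_lt_of_le hlam hlamμ
  have descent := descent_lemma_aux f f' μ hdiff hsmooth
  -- gradient vanishes at the minimizer
  have hgrad0 : f' θstar = 0 := by
    have h1 := descent θstar (θstar - (1 / μ) • f' θstar)
    have h2 := hmin (θstar - (1 / μ) • f' θstar)
    have h3 : θstar - (1 / μ) • f' θstar - θstar = -((1 / μ) • f' θstar) := by abel
    rw [h3] at h1
    rw [inner_neg_right, real_inner_smul_right, real_inner_self_eq_norm_sq,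
      norm_neg, norm_smul, Real.norm_eq_abs, abs_of_pos (by positivity : (0:ℝ) < 1 / μ)] at h1
    have e : μ / 2 * (1 / μ * ‖f' θstar‖) ^ 2 = 1 / μ * ‖f' θstar‖ ^ 2 / 2 := by
      field_simp
    rw [e] at h1
    have ha : 1 / μ * ‖f' θstar‖ ^ 2 ≤ 0 := by linarith
    have haa : μ * (1 / μ * ‖f' θstar‖ ^ 2) = ‖f' θstar‖ ^ 2 := by field_simp
    have ht : ‖f' θstar‖ ^ 2 ≤ 0 := by nlinarith [ha, hμ]
    have := pow_eq_zero_iff (n := 2) (by norm_num) |>.1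
      (le_antisymm ht (sq_nonneg _))
    simpa using this
  -- PL inequality
  have hPL : ∀ x : E, 2 * lam * (f x - f θstar) ≤ ‖f' x‖ ^ 2 := by
    intro x
    have h1 := hsc x θstar
    have hsq : (0:ℝ) ≤ ‖lam • (θstar - x) + f' x‖ ^ 2 := sq_nonneg _
    rw [norm_add_sq_real, norm_smul, real_inner_smul_left, Real.norm_eq_abs,
      abs_of_pos hlam, real_inner_comm] at hsq
    nlinarith [h1, hsq, hlam, sq_nonneg ‖θstar - x‖]
  -- step-size constants
  have hημ : η * μ < 2 := by
    have := (lt_div_iff₀ hμ).1 hη2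
    linarith
  have hc : 0 < η * (1 - μ * η / 2) := by nlinarith [hη, hημ]
  have hρ0 : 0 ≤ ρ := by
    have h1 : 0 < 1 - μ * η / 2 := by nlinarith [hc, hη]
    have h2 : 2 * η * lam * (1 - μ * η / 2) ≤ 2 * η * μ * (1 - μ * η / 2) := by nlinarith
    have h3 : (1 - μ * η) ^ 2 = 1 - 2 * η * μ * (1 - μ * η / 2) := by ring
    nlinarith [sq_nonneg (1 - μ * η)]
  -- one-step contraction in function values
  have hstep : ∀ s : ℕ, f (θseq (s + 1)) - f θstar ≤ ρ * (f (θseq s) - f θstar) := by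
    intro s
    set g := f' (θseq s) with hgdef
    have h1 := descent (θseq s) (θseq (s + 1))
    rw [hiter s] at h1 ⊢
    have h3 : θseq s - η • g - θseq s = -(η • g) := by abel
    rw [h3, inner_neg_right, real_inner_smul_right, real_inner_self_eq_norm_sq,
      norm_neg, norm_smul, Real.norm_eq_abs, abs_of_pos hη] at h1
    have h4 : f (θseq s - η • g) ≤ f (θseq s) - η * (1 - μ * η / 2) * ‖g‖ ^ 2 := by
      nlinarith [h1]
    have h5 := hPL (θseq s)
    rw [← hgdef] at h5
    have h6 : η * (1 - μ * η / 2) * (2 * lam * (f (θseq s) - f θstar))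
        ≤ η * (1 - μ * η / 2) * ‖g‖ ^ 2 :=
      mul_le_mul_of_nonneg_left h5 (le_of_lt hc)
    rw [hρ]
    nlinarith [h4, h6]
  -- induction: function value bound
  have hval : ∀ s : ℕ, f (θseq s) - f θstar ≤ ρ ^ s * (f (θseq 0) - f θstar) := by
    intro s
    induction s with
    | zero => simp
    | succ n ih =>
      calc f (θseq (n + 1)) - f θstar ≤ ρ * (f (θseq n) - f θstar) := hstep n
        _ ≤ ρ * (ρ ^ n * (f (θseq 0) - f θstar)) := mul_le_mul_of_nonneg_left ih hρ0
        _ = ρ ^ (n + 1) * (f (θseq 0) - f θstar) := by ring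
  -- strong convexity at the minimizer
  intro s
  have h1 := hsc θstar (θseq s)
  rw [hgrad0] at h1
  simp only [inner_zero_left, add_zero] at h1
  have h2 : lam / 2 * ‖θseq s - θstar‖ ^ 2 ≤ f (θseq s) - f θstar := by linarith
  have h3 : ‖θseq s - θstar‖ ^ 2 ≤ 2 / lam * (f (θseq s) - f θstar) := by
    rw [div_mul_eq_mul_div, le_div_iff₀ hlam]
    nlinarith [h2]
  calc ‖θseq s - θstar‖ ^ 2 ≤ 2 / lam * (f (θseq s) - f θstar) := h3
    _ ≤ 2 / lam * (ρ ^ s * (f (θseq 0) - f θstar)) :=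
        mul_le_mul_of_nonneg_left (hval s) (by positivity)
    _ = 2 * ρ ^ s / lam * (f (θseq 0) - f θstar) := by ring
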